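/- arXiv:1310.7640 — 3 statements merged into one kernel-verified Lean document; each statement's English description precedes it below -/
import Mathlib

section
/- Let k be an algebraically closed field of characteristic zero, let s, t ≥ 1, let μ = (μ₁,…,μ_s) and ν = (ν₁,…,ν_t) be tuples of positive integers, and let d = gcd(μ₁,…,μ_s,ν₁,…,ν_t). Then in the polynomial ring k[x₁,…,x_s,y₁,…,y_t] one has the factorization x^μ − y^ν = ∏_{ζ ∈ k, ζ^d = 1} (x^{μ/d} − ζ·y^{ν/d}), where the product runs over all d-th roots of unity ζ in k; moreover each factor x^{μ/d} − ζ·y^{ν/d} is irreducible in k[x₁,…,x_s,y₁,…,y_t], and for distinct d-th roots of unity ζ ≠ ζ' the corresponding factors are not associates of each other. In particular, this is the factorization of x^μ − y^ν into irreducibles, each irreducible factor occurring with multiplicity one. -/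
/-!
With `a = μ/d` and `b = ν/d` the exponents are coprime, and the factorization is
`Xᵈ − Yᵈ = ∏ (X − ζY)` at `X = x^a`, `Y = y^b`. For the irreducibility of `x^a − c·y^b` pick a
variable `v` with odd exponent (one exists since the gcd is 1; up to the unit `−c` it is one of
the `x`'s). As a polynomial in `v` over the other variables it reads `A·vⁿ − B` with coprime
monomials `A`, `B`, so it is primitive, and by Gauss's lemma and Capelli's theorem for odd `n` it
is irreducible once `B/A` is no `p`-th power in the fraction field for primes `p ∣ n`. The order
of vanishing along a variable whose exponent is prime to `p` rules that out. Distinct roots of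
unity give non-associated factors because the units of the polynomial ring are the constants.
-/

theorem pow_sub_pow_eq_prod_sub_algebraMap_mul {K S : Type*} [Field K] [CommRing S] [IsDomain S]
    [Algebra K S] {n : ℕ} (hn : 0 < n) {ζ : K} (hζ : IsPrimitiveRoot ζ n) (x y : S) :
    x ^ n - y ^ n = ∏ η ∈ Polynomial.nthRootsFinset n (1 : K), (x - algebraMap K S η * y) := by
  classical
  have hinj := FaithfulSMul.algebraMap_injective K S
  have hζS := hζ.map_of_injective hinj
  have himage : (Polynomial.nthRootsFinset n (1 : K)).image (algebraMap K S) =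
      Polynomial.nthRootsFinset n (1 : S) := by
    refine Finset.eq_of_subset_of_card_le ?_ ?_
    · exact Finset.image_subset_iff.mpr fun η hη => Polynomial.map_mem_nthRootsFinset_one hη _
    · rw [Finset.card_image_of_injective _ hinj, hζ.card_nthRootsFinset, hζS.card_nthRootsFinset]
  rw [hζS.pow_sub_pow_eq_prod_sub_mul x y hn, ← himage, Finset.prod_image hinj.injOn]

theorem pow_ne_div_of_not_modEq_multiplicity {R K : Type*} [CommRing R] [IsDomain R]
    [WfDvdMonoid R] [Field K] [Algebra R K] [IsFractionRing R K] {q : R} (hq : Prime q)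
    {a b : R} (ha : a ≠ 0) (hb : b ≠ 0) {p : ℕ}
    (hab : ¬ multiplicity q a ≡ multiplicity q b [MOD p]) (u : K) :
    u ^ p ≠ algebraMap R K b / algebraMap R K a := by
  obtain ⟨f, g, hg, rfl⟩ := IsFractionRing.div_surjective (A := R) u
  have hg0 : g ≠ 0 := nonZeroDivisors.ne_zero hg
  have hinj := IsFractionRing.injective R K
  intro h
  have hcross : f ^ p * a = b * g ^ p := by
    apply hinj
    rw [div_pow, div_eq_div_iff (pow_ne_zero p ((map_ne_zero_iff _ hinj).mpr hg0))
      ((map_ne_zero_iff _ hinj).mpr ha)] at h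
    simpa using h
  obtain rfl | hp := eq_or_ne p 0
  · simp only [pow_zero, one_mul, mul_one] at hcross
    exact hab (hcross ▸ rfl)
  have hf : f ≠ 0 := by
    rintro rfl
    rw [zero_pow hp, zero_mul] at hcross
    exact mul_ne_zero hb (pow_ne_zero p hg0) hcross.symm
  have hfin {x : R} (hx : x ≠ 0) : FiniteMultiplicity q x := .of_prime_left hq hx
  have hmult := congrArg (multiplicity q) hcross
  rw [multiplicity_mul hq (hfin (mul_ne_zero (pow_ne_zero p hf) ha)),
    multiplicity_mul hq (hfin (mul_ne_zero hb (pow_ne_zero p hg0))),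
    (hfin hf).multiplicity_pow hq, (hfin hg0).multiplicity_pow hq] at hmult
  refine hab ?_
  simpa [Nat.ModEq, Nat.mul_add_mod] using congrArg (· % p) hmult

theorem prod_pow_div_pow {M ι : Type*} [CommMonoid M] [Fintype ι] (f : ι → M) {m : ι → ℕ} {d : ℕ}
    (h : ∀ i, d ∣ m i) : (∏ i, f i ^ (m i / d)) ^ d = ∏ i, f i ^ m i := by
  rw [← Finset.prod_pow]
  exact Finset.prod_congr rfl fun i _ => by rw [← pow_mul, Nat.div_mul_cancel (h i)]

namespace Polynomial

theorem irreducible_C_mul_X_pow_sub_C_of_odd {R K : Type*} [CommRing R] [IsDomain R] [Field K]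
    [Algebra R K] [IsFractionRing R K] {a b : R} (ha : a ≠ 0) (hab : IsRelPrime a b) {n : ℕ}
    (hn : Odd n)
    (hpow : ∀ p : ℕ, p.Prime → p ∣ n → ∀ u : K, u ^ p ≠ algebraMap R K b / algebraMap R K a) :
    Irreducible (C a * X ^ n - C b) := by
  have hn0 : n ≠ 0 := hn.pos.ne'
  have hprim : (C a * X ^ n - C b).IsPrimitive := by
    refine isPrimitive_iff_isUnit_of_C_dvd.mpr fun r hr => hab ?_ ?_
    · simpa [hn0, coeff_C] using (C_dvd_iff_dvd_coeff r _).mp hr n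
    · simpa [hn0.symm] using (C_dvd_iff_dvd_coeff r _).mp hr 0
  have ha' : algebraMap R K a ≠ 0 := (map_ne_zero_iff _ (IsFractionRing.injective R K)).mpr ha
  have hmap : (C a * X ^ n - C b).map (algebraMap R K) =
      C (algebraMap R K a) * (X ^ n - C (algebraMap R K b / algebraMap R K a)) := by
    rw [mul_sub, ← C_mul, mul_div_cancel₀ _ ha']
    simp
  refine hprim.irreducible_of_irreducible_map_of_injective (IsFractionRing.injective R K) ?_
  rw [hmap]
  exact (irreducible_isUnit_mul (isUnit_C.mpr ha'.isUnit)).mpr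
    (X_pow_sub_C_irreducible_of_odd hn hpow)

end Polynomial

namespace MvPolynomial

theorem isRelPrime_monomial_of_disjoint {σ k : Type*} [Field k] {α β : σ →₀ ℕ}
    (hdis : Disjoint α.support β.support) {c : k} (hc : c ≠ 0) :
    IsRelPrime (monomial α 1 : MvPolynomial σ k) (monomial β c) := by
  classical
  rw [← prod_X_pow_eq_monomial, ← mul_one c, ← C_mul_monomial, ← prod_X_pow_eq_monomial,
    isRelPrime_mul_unit_left_right (hc.isUnit.map (C : k →+* MvPolynomial σ k))]
  refine IsRelPrime.prod_left fun v hv => IsRelPrime.prod_right fun w hw => ?_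
  refine IsRelPrime.pow_left (IsRelPrime.pow_right ?_)
  rw [X_prime.irreducible.isRelPrime_iff_not_dvd, X_dvd_X]
  rintro rfl
  exact Finset.disjoint_left.mp hdis hv hw

theorem multiplicity_X_monomial {σ k : Type*} [Field k] (v : σ) (α : σ →₀ ℕ) {r : k} (hr : r ≠ 0) :
    multiplicity (X v) (monomial α r : MvPolynomial σ k) = α v := by
  classical
  apply multiplicity_eq_of_dvd_of_not_dvd
  · rw [X_pow_eq_monomial, monomial_dvd_monomial]
    exact ⟨Or.inr (Finsupp.single_le_iff.mpr le_rfl), one_dvd _⟩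
  · rw [X_pow_eq_monomial, monomial_dvd_monomial]
    rintro ⟨h | h, -⟩
    · exact hr h
    · simpa using Finsupp.single_le_iff.mp h

theorem optionEquivLeft_rename_optionSubtypeNe_monomial {σ R : Type*} [CommSemiring R]
    [DecidableEq σ] (v₀ : σ) (γ : σ →₀ ℕ) (r : R) :
    optionEquivLeft R {v // v ≠ v₀} (rename (Equiv.optionSubtypeNe v₀).symm (monomial γ r)) =
      .monomial (γ v₀) (monomial (γ.subtypeDomain (· ≠ v₀)) r) := by
  have hsome : (γ.mapDomain (Equiv.optionSubtypeNe v₀).symm).some = γ.subtypeDomain (· ≠ v₀) := by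
    ext w
    simp [Finsupp.mapDomain_equiv_apply]
  rw [rename_monomial, optionEquivLeft_monomial, hsome]
  simp [Finsupp.mapDomain_equiv_apply]

-- The odd exponent avoids the `−4b⁴` exception in Capelli's criterion for `Xⁿ − b`.
theorem irreducible_monomial_sub_monomial_of_odd {σ k : Type*} [Field k] {α β : σ →₀ ℕ}
    (hdis : Disjoint α.support β.support) {c : k} (hc : c ≠ 0) {v₀ : σ} (hodd : Odd (α v₀))
    (hcop : ∀ p : ℕ, p.Prime → p ∣ α v₀ → ∃ v, ¬ α v ≡ β v [MOD p]) :
    Irreducible (monomial α 1 - monomial β c : MvPolynomial σ k) := by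
  classical
  have hβ : β v₀ = 0 := Finsupp.notMem_support_iff.mp fun h =>
    Finset.disjoint_left.mp hdis (Finsupp.mem_support_iff.mpr hodd.pos.ne') h
  let e := (renameEquiv k (Equiv.optionSubtypeNe v₀).symm).trans (optionEquivLeft k {v // v ≠ v₀})
  refine Irreducible.of_map (f := e) ?_
  simp only [e, AlgEquiv.trans_apply, renameEquiv_apply, map_sub,
    optionEquivLeft_rename_optionSubtypeNe_monomial, hβ, ← Polynomial.C_mul_X_pow_eq_monomial,
    pow_zero, mul_one]
  refine Polynomial.irreducible_C_mul_X_pow_sub_C_of_odd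
    (K := FractionRing (MvPolynomial {v // v ≠ v₀} k)) (monomial_eq_zero.not.mpr one_ne_zero)
    (isRelPrime_monomial_of_disjoint ?_ hc) hodd fun p hp hpn => ?_
  · refine Finset.disjoint_left.mpr fun w hwα hwβ =>
      Finset.disjoint_left.mp hdis (show w.1 ∈ α.support by simpa using hwα) (by simpa using hwβ)
  obtain ⟨v, hv⟩ := hcop p hp hpn
  have hv₀ : v ≠ v₀ := by
    rintro rfl
    exact hv (by rw [hβ]; exact Nat.modEq_zero_iff_dvd.mpr hpn)
  refine pow_ne_div_of_not_modEq_multiplicity (X_prime (i := (⟨v, hv₀⟩ : {v // v ≠ v₀})))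
    (monomial_eq_zero.not.mpr one_ne_zero) (monomial_eq_zero.not.mpr hc) ?_
  rwa [multiplicity_X_monomial _ _ one_ne_zero, multiplicity_X_monomial _ _ hc]

theorem irreducible_monomial_sub_monomial {σ k : Type*} [Field k] {α β : σ →₀ ℕ}
    (hdis : Disjoint α.support β.support) {c : k} (hc : c ≠ 0)
    (hcop : ∀ p : ℕ, p.Prime → ∃ v, ¬ α v ≡ β v [MOD p]) :
    Irreducible (monomial α 1 - monomial β c : MvPolynomial σ k) := by
  obtain ⟨v, hv⟩ := hcop 2 Nat.prime_two
  have hzero : α v = 0 ∨ β v = 0 := by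
    by_contra! h
    exact Finset.disjoint_left.mp hdis (Finsupp.mem_support_iff.mpr h.1)
      (Finsupp.mem_support_iff.mpr h.2)
  rcases hzero with hα | hβ
  · have hodd : Odd (β v) := by
      simp only [Nat.ModEq, hα] at hv
      exact Nat.odd_iff.mpr (by omega)
    have hirr := irreducible_monomial_sub_monomial_of_odd hdis.symm (inv_ne_zero hc) hodd
      fun p hp _ => (hcop p hp).imp fun _ h => mt Nat.ModEq.symm h
    have hassoc : (monomial α 1 - monomial β c : MvPolynomial σ k) =
        C (-c) * (monomial β 1 - monomial α c⁻¹) := by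
      rw [mul_sub, C_mul_monomial, C_mul_monomial, mul_one, neg_mul, mul_inv_cancel₀ hc,
        map_neg, map_neg, sub_neg_eq_add, neg_add_eq_sub]
    rw [hassoc]
    exact (irreducible_isUnit_mul ((neg_ne_zero.mpr hc).isUnit.map C)).mpr hirr
  · have hodd : Odd (α v) := by
      simp only [Nat.ModEq, hβ] at hv
      exact Nat.odd_iff.mpr (by omega)
    exact irreducible_monomial_sub_monomial_of_odd hdis hc hodd fun p hp _ => hcop p hp

theorem eq_of_associated_monomial_sub_monomial {σ k : Type*} [Field k] {α β : σ →₀ ℕ}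
    (hαβ : α ≠ β) {c c' : k}
    (h : Associated (monomial α 1 - monomial β c : MvPolynomial σ k)
      (monomial α 1 - monomial β c')) :
    c = c' := by
  classical
  obtain ⟨u, hu⟩ := h
  obtain ⟨r, -, hr⟩ := isUnit_iff_eq_C_of_isReduced.mp u.isUnit
  rw [hr, mul_comm] at hu
  have hα := congrArg (coeff α) hu
  have hβ := congrArg (coeff β) hu
  simp only [coeff_C_mul, coeff_sub, coeff_monomial, if_pos, if_neg hαβ, if_neg hαβ.symm,
    sub_zero, zero_sub, mul_one, mul_neg] at hα hβ
  rw [hα, one_mul] at hβ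
  exact neg_injective hβ

section Binomial

variable {ι κ k : Type*} [Fintype ι] [Fintype κ] [Field k]

noncomputable def binomial (a : ι → ℕ) (b : κ → ℕ) (c : k) : MvPolynomial (ι ⊕ κ) k :=
  (∏ i, X (Sum.inl i) ^ a i) - C c * ∏ j, X (Sum.inr j) ^ b j

theorem binomial_eq_monomial_sub_monomial (a : ι → ℕ) (b : κ → ℕ) (c : k) :
    binomial a b c = monomial (Finsupp.equivFunOnFinite.symm (Sum.elim a 0)) 1 -
      monomial (Finsupp.equivFunOnFinite.symm (Sum.elim 0 b)) c := by
  classical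
  simp [binomial, monomial_eq, Finsupp.prod_fintype, Fintype.prod_sum_type]

theorem irreducible_binomial {a : ι → ℕ} {b : κ → ℕ} (hab : Finset.univ.gcd (Sum.elim a b) = 1)
    {c : k} (hc : c ≠ 0) : Irreducible (binomial a b c) := by
  rw [binomial_eq_monomial_sub_monomial]
  refine irreducible_monomial_sub_monomial ?_ hc fun p hp => ?_
  · exact Finset.disjoint_left.mpr fun v hα hβ => by cases v <;> simp_all
  · by_contra! h
    refine hp.not_dvd_one (hab ▸ Finset.dvd_gcd fun v _ => ?_)
    have hv := h v
    cases v <;> simpa [Nat.modEq_zero_iff_dvd, Nat.ModEq.comm] using hv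

theorem eq_of_associated_binomial {a : ι → ℕ} {b : κ → ℕ} (hab : a ≠ 0 ∨ b ≠ 0) {c c' : k}
    (h : Associated (binomial a b c) (binomial a b c')) : c = c' := by
  rw [binomial_eq_monomial_sub_monomial, binomial_eq_monomial_sub_monomial] at h
  refine eq_of_associated_monomial_sub_monomial (fun heq => ?_) h
  obtain ⟨i, hi⟩ | ⟨j, hj⟩ := hab.imp Function.ne_iff.mp Function.ne_iff.mp
  · exact hi (by simpa using congrArg (· (Sum.inl i)) heq)
  · exact hj (by simpa [eq_comm] using congrArg (· (Sum.inr j)) heq)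

end Binomial

end MvPolynomial

open MvPolynomial

theorem stmt_0_general {k : Type*} [Field k] [IsAlgClosed k] [CharZero k]
    (s t : ℕ) (hs : 1 ≤ s)
    (μ : Fin s → ℕ) (ν : Fin t → ℕ)
    (hμ : ∀ i, 0 < μ i)
    (d : ℕ) (hd : d = (Finset.univ : Finset (Fin s ⊕ Fin t)).gcd (Sum.elim μ ν)) :
    (((∏ i : Fin s, X (Sum.inl i) ^ μ i) - ∏ j : Fin t, X (Sum.inr j) ^ ν j :
        MvPolynomial (Fin s ⊕ Fin t) k)
      = ∏ ζ ∈ Polynomial.nthRootsFinset d (1 : k),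
          ((∏ i : Fin s, X (Sum.inl i) ^ (μ i / d)) -
            C ζ * ∏ j : Fin t, X (Sum.inr j) ^ (ν j / d)))
    ∧ (∀ ζ ∈ Polynomial.nthRootsFinset d (1 : k),
        Irreducible
          ((∏ i : Fin s, X (Sum.inl i) ^ (μ i / d)) -
              C ζ * ∏ j : Fin t, X (Sum.inr j) ^ (ν j / d) :
            MvPolynomial (Fin s ⊕ Fin t) k))
    ∧ (∀ ζ ∈ Polynomial.nthRootsFinset d (1 : k), ∀ ζ' ∈ Polynomial.nthRootsFinset d (1 : k),
        ζ ≠ ζ' →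
        ¬ Associated
            ((∏ i : Fin s, X (Sum.inl i) ^ (μ i / d)) -
                C ζ * ∏ j : Fin t, X (Sum.inr j) ^ (ν j / d) :
              MvPolynomial (Fin s ⊕ Fin t) k)
            ((∏ i : Fin s, X (Sum.inl i) ^ (μ i / d)) -
              C ζ' * ∏ j : Fin t, X (Sum.inr j) ^ (ν j / d))) := by
  obtain ⟨i₀⟩ : Nonempty (Fin s) := ⟨⟨0, hs⟩⟩
  have hdvd (v : Fin s ⊕ Fin t) : d ∣ Sum.elim μ ν v := hd ▸ Finset.gcd_dvd (Finset.mem_univ v)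
  have hd0 : 0 < d := Nat.pos_of_dvd_of_pos (hdvd (.inl i₀)) (hμ i₀)
  have hcop : Finset.univ.gcd (Sum.elim (μ · / d) (ν · / d)) = 1 := by
    rw [hd, ← Finset.gcd_div_eq_one (f := Sum.elim μ ν) (Finset.mem_univ (Sum.inl i₀))
      (hμ i₀).ne']
    exact Finset.gcd_congr rfl fun v _ => by cases v <;> rfl
  refine ⟨?_, fun ζ hζ => ?_, fun ζ _ ζ' _ hne h => hne (eq_of_associated_binomial ?_ h)⟩
  · have : NeZero (d : k) := ⟨Nat.cast_ne_zero.mpr hd0.ne'⟩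
    obtain ⟨ω, hω⟩ := HasEnoughRootsOfUnity.exists_primitiveRoot k d
    rw [← prod_pow_div_pow (m := μ) _ fun i => hdvd (.inl i),
      ← prod_pow_div_pow (m := ν) _ fun j => hdvd (.inr j), ← algebraMap_eq,
      pow_sub_pow_eq_prod_sub_algebraMap_mul hd0 hω]
  · exact irreducible_binomial hcop (Polynomial.ne_zero_of_mem_nthRootsFinset one_ne_zero hζ)
  · refine .inl (Function.ne_iff.mpr ⟨i₀, (Nat.div_pos ?_ hd0).ne'⟩)
    exact Nat.le_of_dvd (hμ i₀) (hdvd (.inl i₀))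

/-- Factorization of `x^μ − y^ν` into irreducibles over an algebraically closed field `k`
of characteristic zero: with `d = gcd(μ₁,…,μ_s,ν₁,…,ν_t)`, one has
`x^μ − y^ν = ∏_{ζ^d = 1} (x^{μ/d} − ζ·y^{ν/d})`, each factor is irreducible, and factors
corresponding to distinct roots of unity are not associates (multiplicity one). -/
theorem stmt_0 {k : Type*} [Field k] [IsAlgClosed k] [CharZero k]
    (s t : ℕ) (hs : 1 ≤ s) (ht : 1 ≤ t)
    (μ : Fin s → ℕ) (ν : Fin t → ℕ)
    (hμ : ∀ i, 0 < μ i) (hν : ∀ j, 0 < ν j)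
    (d : ℕ) (hd : d = (Finset.univ : Finset (Fin s ⊕ Fin t)).gcd (Sum.elim μ ν)) :
    (((∏ i : Fin s, X (Sum.inl i) ^ μ i) - ∏ j : Fin t, X (Sum.inr j) ^ ν j :
        MvPolynomial (Fin s ⊕ Fin t) k)
      = ∏ ζ ∈ Polynomial.nthRootsFinset d (1 : k),
          ((∏ i : Fin s, X (Sum.inl i) ^ (μ i / d)) -
            C ζ * ∏ j : Fin t, X (Sum.inr j) ^ (ν j / d)))
    ∧ (∀ ζ ∈ Polynomial.nthRootsFinset d (1 : k),
        Irreducible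
          ((∏ i : Fin s, X (Sum.inl i) ^ (μ i / d)) -
              C ζ * ∏ j : Fin t, X (Sum.inr j) ^ (ν j / d) :
            MvPolynomial (Fin s ⊕ Fin t) k))
    ∧ (∀ ζ ∈ Polynomial.nthRootsFinset d (1 : k), ∀ ζ' ∈ Polynomial.nthRootsFinset d (1 : k),
        ζ ≠ ζ' →
        ¬ Associated
            ((∏ i : Fin s, X (Sum.inl i) ^ (μ i / d)) -
                C ζ * ∏ j : Fin t, X (Sum.inr j) ^ (ν j / d) :
              MvPolynomial (Fin s ⊕ Fin t) k)
            ((∏ i : Fin s, X (Sum.inl i) ^ (μ i / d)) -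
              C ζ' * ∏ j : Fin t, X (Sum.inr j) ^ (ν j / d))) :=
  stmt_0_general s t hs μ ν hμ d hd
end

section
/- Let k be an algebraically closed field of characteristic zero, let s, t ≥ 1, and let μ = (μ₁,…,μ_s) and ν = (ν₁,…,ν_t) be tuples of positive integers with gcd(μ₁,…,μ_s,ν₁,…,ν_t) = 1. Then for every nonzero scalar λ ∈ k, the polynomial x^μ − λ·y^ν is irreducible in the polynomial ring k[x₁,…,x_s,y₁,…,y_t]. -/
/-!
Put `v = a - b ∈ ℤ^σ` and pick `c` with `c ⬝ᵥ v = 1` (Bézout). The algebra map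
`X^e ↦ lam ^ (c ⬝ᵥ e) • T ^ (e - (c ⬝ᵥ e) • v)` into the Laurent polynomial ring `k[ℤ^σ]`, a domain,
kills `f = X^a - lam X^b`. Two monomials `X^e`, `X^e'` land on the same Laurent monomial exactly
when `e - e' ∈ ℤ v`; as `a` and `b` have disjoint supports, `{e, e'} = {d + n • a, d + n • b}`, and
`lam ^ (-(c ⬝ᵥ e)) X^e ≡ lam ^ (-(c ⬝ᵥ e')) X^e' mod f`. Reading off Laurent coefficients therefore
inverts the map modulo `f`, so its kernel is `(f)`, which is thus prime.
-/

open MvPolynomial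
open scoped Matrix

theorem Int.exists_dotProduct_eq_one_of_gcd_natAbs_eq_one {ι : Type*} [Fintype ι] {v : ι → ℤ}
    (h : Finset.univ.gcd (fun i => (v i).natAbs) = 1) : ∃ c : ι → ℤ, c ⬝ᵥ v = 1 := by
  obtain ⟨g, hg⟩ := Finset.gcd_eq_sum_mul Finset.univ v
  set d := Finset.univ.gcd v
  have hd : IsUnit d := by
    rw [Int.isUnit_iff_natAbs_eq, ← Nat.dvd_one, ← h]
    exact Finset.dvd_gcd fun i hi => Int.natAbs_dvd_natAbs.mpr (Finset.gcd_dvd hi)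
  refine ⟨fun i => d * g i, ?_⟩
  rw [← Int.isUnit_mul_self hd, hg, Finset.mul_sum, dotProduct]
  exact Finset.sum_congr rfl fun i _ => by ring

section

variable {σ : Type*}

namespace Finsupp

@[simps]
def toIntFun : (σ →₀ ℕ) →+ (σ → ℤ) where
  toFun a i := a i
  map_zero' := by ext; simp
  map_add' a b := by ext; simp

theorem exists_eq_add_nsmul_of_toIntFun_sub {a b a' b' : σ →₀ ℕ} (hab : ∀ i, a i = 0 ∨ b i = 0)
    {n : ℕ} (h : toIntFun a' - toIntFun b' = n • (toIntFun a - toIntFun b)) :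
    ∃ d, a' = d + n • a ∧ b' = d + n • b := by
  refine ⟨a' - n • a, ?_, ?_⟩ <;> ext i <;> have hi := congrFun h i <;>
    rcases hab i with h0 | h0 <;>
    simp only [Pi.sub_apply, toIntFun_apply, Pi.smul_apply, h0, CharP.cast_eq_zero, sub_zero,
      zero_sub, mul_neg, coe_add, coe_tsub, coe_smul, nsmul_eq_mul,
      Pi.add_apply, Pi.mul_apply, Pi.natCast_apply, Nat.cast_id, mul_zero, tsub_zero,
      add_zero] at hi ⊢ <;>
    omega

end Finsupp

open Finsupp (toIntFun)

/-- For `c ⬝ᵥ v = 1`, the projection of `ℤ^σ` onto `ker (c ⬝ᵥ ·)` along `v`. -/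
def projAlong [Fintype σ] (c v : σ → ℤ) : (σ → ℤ) →+ (σ → ℤ) where
  toFun x := x - (c ⬝ᵥ x) • v
  map_zero' := by simp
  map_add' x y := by simp only [dotProduct_add, add_smul]; abel

theorem projAlong_eq_iff [Fintype σ] {c v x y : σ → ℤ} :
    projAlong c v x = projAlong c v y ↔ x - y = (c ⬝ᵥ (x - y)) • v := by
  rw [← sub_eq_zero, ← map_sub]
  exact sub_eq_zero

namespace MvPolynomial

variable {k : Type*} [Fintype σ] [CommRing k]

noncomputable def laurentMap (c v : σ → ℤ) (lam : kˣ) :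
    MvPolynomial σ k →ₐ[k] AddMonoidAlgebra k (σ → ℤ) :=
  AddMonoidAlgebra.lift k _ (σ →₀ ℕ)
    { toFun e := AddMonoidAlgebra.single (projAlong c v (toIntFun e.toAdd))
        ((lam ^ (c ⬝ᵥ toIntFun e.toAdd) : kˣ) : k)
      map_one' := by
        simp only [toAdd_one, map_zero, dotProduct_zero, zpow_zero, Units.val_one]; rfl
      map_mul' e e' := by
        simp only [toAdd_mul, map_add, dotProduct_add, _root_.zpow_add, Units.val_mul,
          AddMonoidAlgebra.single_mul_single] }

theorem laurentMap_monomial (c v : σ → ℤ) (lam : kˣ) (e : σ →₀ ℕ) (r : k) :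
    laurentMap c v lam (monomial e r) =
      AddMonoidAlgebra.single (projAlong c v (toIntFun e))
        (r * (lam ^ (c ⬝ᵥ toIntFun e) : kˣ)) := by
  simp [laurentMap, monomial]

theorem laurentMap_binomial {c : σ → ℤ} {a b : σ →₀ ℕ}
    (hc : c ⬝ᵥ (toIntFun a - toIntFun b) = 1) (lam : kˣ) :
    laurentMap c (toIntFun a - toIntFun b) lam (monomial a 1 - C (lam : k) * monomial b 1) = 0 := by
  have hdot : c ⬝ᵥ toIntFun a = c ⬝ᵥ toIntFun b + 1 := by
    rw [← hc, dotProduct_sub]; ring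
  have hproj : projAlong c (toIntFun a - toIntFun b) (toIntFun a) =
      projAlong c (toIntFun a - toIntFun b) (toIntFun b) := by
    rw [projAlong_eq_iff, hc, one_smul]
  rw [C_mul_monomial, mul_one, map_sub, laurentMap_monomial, laurentMap_monomial, hproj, hdot,
    zpow_add_one, Units.val_mul, one_mul, mul_comm, sub_self]

section Quotient

variable (c : σ → ℤ) (a b : σ →₀ ℕ) (lam : kˣ)

noncomputable def normalizedMonomialClass (e : σ →₀ ℕ) :
    MvPolynomial σ k ⧸ Ideal.span {monomial a 1 - C (lam : k) * monomial b 1} :=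
  Ideal.Quotient.mk _ (monomial e ((lam ^ (-(c ⬝ᵥ toIntFun e)) : kˣ) : k))

variable {c a b}

theorem normalizedMonomialClass_add_left (hc : c ⬝ᵥ (toIntFun a - toIntFun b) = 1)
    (e : σ →₀ ℕ) :
    normalizedMonomialClass c a b lam (e + a) =
      normalizedMonomialClass (k := k) c a b lam (e + b) := by
  have hdot : c ⬝ᵥ toIntFun (e + a) = c ⬝ᵥ toIntFun (e + b) + 1 := by
    rw [← hc, map_add, map_add, dotProduct_add, dotProduct_add, dotProduct_sub]; ring
  rw [normalizedMonomialClass, normalizedMonomialClass, Ideal.Quotient.eq,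
    Ideal.mem_span_singleton]
  set D := c ⬝ᵥ toIntFun (e + b)
  have hlam : (lam : k) * ((lam ^ (-(D + 1)) : kˣ) : k) = ((lam ^ (-D)) : kˣ) := by
    rw [← Units.val_mul, ← zpow_one_add]; congr 2; ring
  refine ⟨monomial e ((lam ^ (-(c ⬝ᵥ toIntFun (e + a))) : kˣ) : k), ?_⟩
  rw [hdot]
  simp only [sub_mul, mul_assoc, monomial_mul, C_mul_monomial, one_mul, add_comm _ e, hlam]

theorem normalizedMonomialClass_add_nsmul (hc : c ⬝ᵥ (toIntFun a - toIntFun b) = 1)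
    (e : σ →₀ ℕ) (n : ℕ) :
    normalizedMonomialClass c a b lam (e + n • a) =
      normalizedMonomialClass (k := k) c a b lam (e + n • b) := by
  induction n generalizing e with
  | zero => simp
  | succ n ih =>
    calc normalizedMonomialClass c a b lam (e + (n + 1) • a)
        = normalizedMonomialClass c a b lam ((e + n • a) + a) := by rw [succ_nsmul, add_assoc]
      _ = normalizedMonomialClass c a b lam ((e + b) + n • a) := by
        rw [normalizedMonomialClass_add_left lam hc, add_right_comm]
      _ = normalizedMonomialClass c a b lam ((e + b) + n • b) := ih (e + b)
      _ = normalizedMonomialClass c a b lam (e + (n + 1) • b) := by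
        rw [succ_nsmul, add_right_comm, add_assoc]

theorem normalizedMonomialClass_factorsThrough (hab : ∀ i, a i = 0 ∨ b i = 0)
    (hc : c ⬝ᵥ (toIntFun a - toIntFun b) = 1) :
    Function.FactorsThrough (normalizedMonomialClass (k := k) c a b lam)
      (fun e => projAlong c (toIntFun a - toIntFun b) (toIntFun e)) := by
  intro e e' h
  rw [projAlong_eq_iff] at h
  obtain ⟨n, hn | hn⟩ := Int.eq_nat_or_neg (c ⬝ᵥ (toIntFun e - toIntFun e'))
  · rw [hn, natCast_zsmul] at h
    obtain ⟨d, rfl, rfl⟩ := Finsupp.exists_eq_add_nsmul_of_toIntFun_sub hab h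
    exact normalizedMonomialClass_add_nsmul lam hc d n
  · have h' : toIntFun e' - toIntFun e = n • (toIntFun a - toIntFun b) := by
      rw [← neg_sub, h, hn, neg_smul, neg_neg, natCast_zsmul]
    obtain ⟨d, rfl, rfl⟩ := Finsupp.exists_eq_add_nsmul_of_toIntFun_sub hab h'
    exact (normalizedMonomialClass_add_nsmul lam hc d n).symm

theorem ker_laurentMap_le (hab : ∀ i, a i = 0 ∨ b i = 0)
    (hc : c ⬝ᵥ (toIntFun a - toIntFun b) = 1) :
    RingHom.ker (laurentMap c (toIntFun a - toIntFun b) lam) ≤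
      Ideal.span {monomial a 1 - C (lam : k) * monomial b 1} := by
  set I := Ideal.span {monomial a 1 - C (lam : k) * monomial b 1}
  let ψ := Function.extend (fun e => projAlong c (toIntFun a - toIntFun b) (toIntFun e))
    (normalizedMonomialClass c a b lam) 0
  have hψ (e : σ →₀ ℕ) : ψ (projAlong c (toIntFun a - toIntFun b) (toIntFun e)) =
      normalizedMonomialClass c a b lam e :=
    (normalizedMonomialClass_factorsThrough lam hab hc).extend_apply 0 e
  let Ψ : AddMonoidAlgebra k (σ → ℤ) →ₗ[k] MvPolynomial σ k ⧸ I :=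
    Finsupp.linearCombination k ψ ∘ₗ (AddMonoidAlgebra.coeffLinearEquiv k).toLinearMap
  have hΨ (g : MvPolynomial σ k) :
      Ψ (laurentMap c (toIntFun a - toIntFun b) lam g) = Ideal.Quotient.mk I g := by
    induction g using MvPolynomial.induction_on' with
    | monomial e r =>
      rw [laurentMap_monomial]
      change Finsupp.linearCombination k ψ (Finsupp.single _ _) = _
      rw [Finsupp.linearCombination_single, hψ, normalizedMonomialClass,
        ← Ideal.Quotient.mkₐ_eq_mk k, ← map_smul, smul_monomial, smul_eq_mul, mul_assoc,
        ← Units.val_mul, ← zpow_add, add_neg_cancel, zpow_zero, Units.val_one, mul_one]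
    | add p q hp hq => rw [map_add, map_add, hp, hq, map_add]
  intro g hg
  rw [← Ideal.Quotient.eq_zero_iff_mem, ← hΨ, RingHom.mem_ker.mp hg, map_zero]

theorem ker_laurentMap (hab : ∀ i, a i = 0 ∨ b i = 0)
    (hc : c ⬝ᵥ (toIntFun a - toIntFun b) = 1) :
    RingHom.ker (laurentMap c (toIntFun a - toIntFun b) lam) =
      Ideal.span {monomial a 1 - C (lam : k) * monomial b 1} := by
  refine le_antisymm (ker_laurentMap_le lam hab hc) ?_
  rw [Ideal.span_le, Set.singleton_subset_iff]
  exact laurentMap_binomial hc lam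

end Quotient

theorem prime_monomial_sub_C_mul_monomial [IsDomain k] {a b : σ →₀ ℕ}
    (hab : ∀ i, a i = 0 ∨ b i = 0) {c : σ → ℤ} (hc : c ⬝ᵥ (toIntFun a - toIntFun b) = 1)
    (lam : kˣ) : Prime (monomial a 1 - C (lam : k) * monomial b 1) := by
  have hne : a ≠ b := by rintro rfl; simp at hc
  have hf : monomial a 1 - C (lam : k) * monomial b 1 ≠ 0 := by
    classical
    intro h
    have := congrArg (coeff a) h
    simp [coeff_monomial, hne.symm] at this
  rw [← Ideal.span_singleton_prime hf, ← ker_laurentMap lam hab hc]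
  exact RingHom.ker_isPrime _

end MvPolynomial

end

theorem stmt_1_general {k : Type*} [Field k]
    (s t : ℕ)
    (μ : Fin s → ℕ) (ν : Fin t → ℕ)
    (hgcd : (Finset.univ : Finset (Fin s ⊕ Fin t)).gcd (Sum.elim μ ν) = 1)
    (lam : k) (hlam : lam ≠ 0) :
    Irreducible
      ((∏ i : Fin s, X (Sum.inl i) ^ μ i) -
          C lam * ∏ j : Fin t, X (Sum.inr j) ^ ν j :
        MvPolynomial (Fin s ⊕ Fin t) k) := by
  set a : Fin s ⊕ Fin t →₀ ℕ := Finsupp.equivFunOnFinite.symm (Sum.elim μ 0)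
  set b : Fin s ⊕ Fin t →₀ ℕ := Finsupp.equivFunOnFinite.symm (Sum.elim 0 ν)
  have hab (i : Fin s ⊕ Fin t) : a i = 0 ∨ b i = 0 := by cases i <;> simp [a, b]
  obtain ⟨c, hc⟩ : ∃ c, c ⬝ᵥ (Finsupp.toIntFun a - Finsupp.toIntFun b) = 1 := by
    refine Int.exists_dotProduct_eq_one_of_gcd_natAbs_eq_one (hgcd ▸ congrArg _ ?_)
    ext i; cases i <;> simp [a, b]
  have hprod (d : Fin s ⊕ Fin t →₀ ℕ) : ∏ i, X i ^ d i = (monomial d 1 : MvPolynomial _ k) := by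
    rw [monomial_eq, C_1, one_mul, Finsupp.prod_fintype _ _ fun _ => pow_zero _]
  have := (prime_monomial_sub_C_mul_monomial hab hc (Units.mk0 lam hlam)).irreducible
  rw [Units.val_mk0, ← hprod, ← hprod, Fintype.prod_sum_type, Fintype.prod_sum_type] at this
  simpa [a, b] using this

/-- Let `k` be an algebraically closed field of characteristic zero, `s, t ≥ 1`, and let
`μ`, `ν` be tuples of positive integers with `gcd(μ₁,…,μ_s,ν₁,…,ν_t) = 1`. Then for every
nonzero `λ ∈ k`, the polynomial `x^μ − λ·y^ν` is irreducible in `k[x₁,…,x_s,y₁,…,y_t]`. -/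
theorem stmt_1 {k : Type*} [Field k] [IsAlgClosed k] [CharZero k]
    (s t : ℕ) (hs : 1 ≤ s) (ht : 1 ≤ t)
    (μ : Fin s → ℕ) (ν : Fin t → ℕ)
    (hμ : ∀ i, 0 < μ i) (hν : ∀ j, 0 < ν j)
    (hgcd : (Finset.univ : Finset (Fin s ⊕ Fin t)).gcd (Sum.elim μ ν) = 1)
    (lam : k) (hlam : lam ≠ 0) :
    Irreducible
      ((∏ i : Fin s, X (Sum.inl i) ^ μ i) -
          C lam * ∏ j : Fin t, X (Sum.inr j) ^ ν j :
        MvPolynomial (Fin s ⊕ Fin t) k) :=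
  stmt_1_general s t μ ν hgcd lam hlam
end

section
/- Let k be an algebraically closed field of characteristic zero, let s, t ≥ 1, and let μ = (μ₁,…,μ_s) and ν = (ν₁,…,ν_t) be tuples of positive integers. Then the quotient ring k[x₁,…,x_s,y₁,…,y_t] / (x^μ − y^ν) of the polynomial ring by the principal ideal generated by x^μ − y^ν is a reduced ring; equivalently, the polynomial x^μ − y^ν is squarefree in k[x₁,…,x_s,y₁,…,y_t]. -/
/-!
If `p ^ 2` divides `f = x^μ - y^ν`, then `p` divides `∂f/∂x₁`. Euler's identity for the
monomial `x^μ` gives `x₁ ∂f/∂x₁ = μ₁ x^μ`, and `μ₁` is a unit in characteristic zero, so `p`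
divides `x^μ` and hence also `y^ν`. These two monomials involve disjoint sets of variables, so
they are relatively prime and `p` is a unit.
-/

open MvPolynomial

theorem Derivation.dvd_of_mul_self_dvd {R A : Type*} [CommSemiring R] [CommSemiring A]
    [Algebra R A] (D : Derivation R A A) {p f : A} (h : p * p ∣ f) : p ∣ D f := by
  obtain ⟨g, rfl⟩ := h
  simp only [D.leibniz, smul_eq_mul]
  exact ⟨p * D g + g * D p + g * D p, by ring⟩

theorem squarefree_sub_of_isRelPrime {R A : Type*} [CommSemiring R] [CommRing A]
    [Algebra R A] (D : Derivation R A A) {a b : A} (hab : IsRelPrime a b)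
    (hD : D (a - b) ∣ a) : Squarefree (a - b) := by
  intro p hp
  have hpa : p ∣ a := (D.dvd_of_mul_self_dvd hp).trans hD
  exact hab hpa ((dvd_sub_right hpa).mp ((dvd_mul_right p p).trans hp))

namespace MvPolynomial

variable {σ ι κ : Type*}

theorem prod_X_pow_eq_monomial_sum {R : Type*} [CommSemiring R] (s : Finset ι) (f : ι → σ)
    (n : ι → ℕ) :
    ∏ i ∈ s, (X (f i) : MvPolynomial σ R) ^ n i
      = monomial (∑ i ∈ s, Finsupp.single (f i) (n i)) 1 := by
  simp [monomial_sum_one, X_pow_eq_monomial]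

theorem X_mul_pderiv_prod_X_pow {R : Type*} [CommSemiring R] [DecidableEq σ] (v : σ)
    (s : Finset ι) (f : ι → σ) (n : ι → ℕ) :
    X v * pderiv v (∏ i ∈ s, (X (f i) : MvPolynomial σ R) ^ n i)
      = (∑ i ∈ s with f i = v, n i) • ∏ i ∈ s, (X (f i) : MvPolynomial σ R) ^ n i := by
  rw [prod_X_pow_eq_monomial_sum, X_mul_pderiv_monomial, Finsupp.finsetSum_apply,
    Finset.sum_filter]
  simp [Finsupp.single_apply]

theorem isRelPrime_prod_X_pow {k : Type*} [Field k] {f : ι → σ} {g : κ → σ}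
    (hfg : ∀ i j, f i ≠ g j) (s : Finset ι) (t : Finset κ) (m : ι → ℕ) (n : κ → ℕ) :
    IsRelPrime (∏ i ∈ s, (X (f i) : MvPolynomial σ k) ^ m i) (∏ j ∈ t, X (g j) ^ n j) :=
  .prod_left fun i _ ↦ .prod_right fun j _ ↦ IsRelPrime.pow <|
    X_prime.irreducible.isRelPrime_iff_not_dvd.mpr (by simpa using hfg i j)

end MvPolynomial

theorem stmt_3_general {k : Type*} [Field k] [CharZero k]
    (s t : ℕ) (hs : 1 ≤ s)
    (μ : Fin s → ℕ) (ν : Fin t → ℕ)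
    (hμ : ∀ i, 0 < μ i) :
    IsReduced
      (MvPolynomial (Fin s ⊕ Fin t) k ⧸
        Ideal.span
          {((∏ i : Fin s, X (Sum.inl i) ^ μ i) - ∏ j : Fin t, X (Sum.inr j) ^ ν j :
            MvPolynomial (Fin s ⊕ Fin t) k)})
    ∧ Squarefree
        ((∏ i : Fin s, X (Sum.inl i) ^ μ i) - ∏ j : Fin t, X (Sum.inr j) ^ ν j :
          MvPolynomial (Fin s ⊕ Fin t) k) := by
  set A : MvPolynomial (Fin s ⊕ Fin t) k := ∏ i : Fin s, X (Sum.inl i) ^ μ i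
  set B : MvPolynomial (Fin s ⊕ Fin t) k := ∏ j : Fin t, X (Sum.inr j) ^ ν j
  let i₀ : Fin s := ⟨0, hs⟩
  have hEuler :
      X (Sum.inl i₀) * pderiv (Sum.inl i₀) (A - B) = (μ i₀ : MvPolynomial _ k) * A := by
    rw [map_sub, mul_sub, X_mul_pderiv_prod_X_pow, X_mul_pderiv_prod_X_pow]
    simp [A, Finset.filter_eq', nsmul_eq_mul]
  have hunit : IsUnit (μ i₀ : MvPolynomial (Fin s ⊕ Fin t) k) := by
    simpa using (IsUnit.mk0 (μ i₀ : k) (by simpa using (hμ i₀).ne')).map (C : k →+* _)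
  have hsq : Squarefree (A - B) :=
    squarefree_sub_of_isRelPrime _ (isRelPrime_prod_X_pow (fun _ _ ↦ Sum.inl_ne_inr) _ _ _ _)
      (hunit.dvd_mul_left.mp (Dvd.intro_left _ hEuler))
  refine ⟨?_, hsq⟩
  rw [← Ideal.isRadical_iff_quotient_reduced, ← isRadical_iff_span_singleton]
  exact hsq.isRadical

/-- Let `k` be an algebraically closed field of characteristic zero, `s, t ≥ 1`, and let
`μ`, `ν` be tuples of positive integers. Then `k[x,y]/(x^μ − y^ν)` is a reduced ring;
equivalently, the polynomial `x^μ − y^ν` is squarefree. -/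
theorem stmt_3 {k : Type*} [Field k] [IsAlgClosed k] [CharZero k]
    (s t : ℕ) (hs : 1 ≤ s) (ht : 1 ≤ t)
    (μ : Fin s → ℕ) (ν : Fin t → ℕ)
    (hμ : ∀ i, 0 < μ i) (hν : ∀ j, 0 < ν j) :
    IsReduced
      (MvPolynomial (Fin s ⊕ Fin t) k ⧸
        Ideal.span
          {((∏ i : Fin s, X (Sum.inl i) ^ μ i) - ∏ j : Fin t, X (Sum.inr j) ^ ν j :
            MvPolynomial (Fin s ⊕ Fin t) k)})
    ∧ Squarefree
        ((∏ i : Fin s, X (Sum.inl i) ^ μ i) - ∏ j : Fin t, X (Sum.inr j) ^ ν j :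
          MvPolynomial (Fin s ⊕ Fin t) k) :=
  stmt_3_general s t hs μ ν hμ
end
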